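/- arXiv:1101.5070 — 3 statements merged into one kernel-verified Lean document; each statement's English description precedes it below -/
import Mathlib

section
/- Let p(t) = t^8 + a1 t^7 + a2 t^6 + a3 t^5 + a4 t^4 + q a3 t^3 + q^2 a2 t^2 + q^3 a1 t + q^4 be a Weil polynomial (all complex roots of absolute value √q, q > 0) with no real roots. Then |a1| < 8√q and 6√q|a1| - 20q < a2 ≤ 3a1²/8 + 4q. -/
/-!
A real polynomial without real roots factors over `ℝ` into quadratics `t² - x t + |z|²`,
one for each conjugate pair of roots `z, z̄`, with `x = 2 Re z`. For a Weil polynomial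
`|z|² = q`, and `|x| < 2√q` because `z` is not real. For the octic, comparing coefficients
gives `a1 = -∑ xᵢ` and `a2 = ∑_{i<j} xᵢxⱼ + 4q`. The upper bound on `a2` is
`∑_{i<j} (xᵢ - xⱼ)² ≥ 0`; the lower bound is the positivity of
`∑_{i<j} (2√q ± xᵢ)(2√q ± xⱼ)`.
-/

open Polynomial

namespace Polynomial

section Quadratic

variable {R : Type*} [CommRing R]

lemma monic_X_sq_sub_C_mul_X_add_C (b c : R) : (X ^ 2 - C b * X + C c).Monic := by
  monicity!

lemma natDegree_X_sq_sub_C_mul_X_add_C [Nontrivial R] (b c : R) :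
    (X ^ 2 - C b * X + C c).natDegree = 2 := by
  compute_degree!

end Quadratic

lemma Monic.exists_eq_prod_quadratic_of_forall_eval_ne_zero {P : ℝ[X]} (hP : P.Monic)
    (hP0 : ∀ t : ℝ, P.eval t ≠ 0) :
    ∃ s : Multiset ℂ, (∀ z ∈ s, aeval z P = 0 ∧ z.im ≠ 0) ∧
      P = (s.map fun z => X ^ 2 - C (2 * z.re) * X + C (‖z‖ ^ 2)).prod := by
  induction hn : P.natDegree using Nat.strong_induction_on generalizing P with
  | _ n ih =>
  rcases eq_or_ne n 0 with rfl | hn0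
  · exact ⟨0, by simp, by simpa using hP.natDegree_eq_zero.mp hn⟩
  obtain ⟨z, hz⟩ := IsAlgClosed.exists_aeval_eq_zero ℂ P
    (by rw [degree_eq_natDegree hP.ne_zero, hn]; exact_mod_cast hn0)
  have hz_im : z.im ≠ 0 := by
    intro him
    have hz_re : (z.re : ℂ) = z := Complex.ext rfl him.symm
    exact hP0 z.re (Complex.ofReal_eq_zero.mp ((aeval_ofReal P z.re).symm.trans (hz_re ▸ hz)))
  obtain ⟨R, rfl⟩ := P.quadratic_dvd_of_aeval_eq_zero_im_ne_zero hz hz_im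
  have hQ := monic_X_sq_sub_C_mul_X_add_C (2 * z.re) (‖z‖ ^ 2)
  have hR : R.Monic := hQ.of_mul_monic_left hP
  have hdeg : n = 2 + R.natDegree := by
    rw [← hn, hQ.natDegree_mul hR, natDegree_X_sq_sub_C_mul_X_add_C]
  obtain ⟨s, hs, hsR⟩ := ih R.natDegree (by omega) hR
    (fun t ht => hP0 t (by rw [eval_mul, ht, mul_zero])) rfl
  refine ⟨z ::ₘ s, ?_, by rw [Multiset.map_cons, Multiset.prod_cons, ← hsR]⟩
  rintro w hw
  rcases Multiset.mem_cons.mp hw with rfl | hw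
  · exact ⟨hz, hz_im⟩
  · exact ⟨by rw [map_mul, (hs w hw).1, mul_zero], (hs w hw).2⟩

lemma Monic.exists_eq_prod_weil_quadratic {q : ℝ} {P : ℝ[X]} (hP : P.Monic)
    (hweil : ∀ z : ℂ, aeval z P = 0 → ‖z‖ = √q) (hP0 : ∀ t : ℝ, P.eval t ≠ 0) :
    ∃ xs : Multiset ℝ, (∀ x ∈ xs, |x| < 2 * √q) ∧
      P = (xs.map fun x => X ^ 2 - C x * X + C q).prod := by
  obtain ⟨s, hs, rfl⟩ := hP.exists_eq_prod_quadratic_of_forall_eval_ne_zero hP0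
  have hnorm : ∀ z ∈ s, ‖z‖ = √q ∧ |z.re| < ‖z‖ := fun z hz =>
    ⟨hweil z (hs z hz).1, Complex.abs_re_lt_norm.mpr (hs z hz).2⟩
  refine ⟨s.map fun z => 2 * z.re, ?_, ?_⟩
  · simp only [Multiset.mem_map, forall_exists_index, and_imp, forall_apply_eq_imp_iff₂]
    intro z hz
    rw [abs_mul, abs_two, ← (hnorm z hz).1]
    linarith [(hnorm z hz).2]
  · rw [Multiset.map_map]
    refine congrArg _ (Multiset.map_congr rfl fun z hz => ?_)
    have hq : 0 < q := Real.sqrt_pos.mp ((hnorm z hz).1 ▸ (abs_nonneg _).trans_lt (hnorm z hz).2)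
    simp only [Function.comp_apply, (hnorm z hz).1, Real.sq_sqrt hq.le]

lemma natDegree_multiset_prod_quadratic (q : ℝ) (xs : Multiset ℝ) :
    (xs.map fun x => X ^ 2 - C x * X + C q).prod.natDegree = 2 * Multiset.card xs := by
  rw [natDegree_multiset_prod_of_monic _
    (by simpa using fun x _ => monic_X_sq_sub_C_mul_X_add_C x q)]
  simp only [Multiset.map_map, Function.comp_def, natDegree_X_sq_sub_C_mul_X_add_C,
    Multiset.map_const', Multiset.sum_replicate, smul_eq_mul]
  exact mul_comm _ _

end Polynomial

noncomputable def weilOctic (q a1 a2 a3 a4 : ℝ) : ℝ[X] :=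
  X ^ 8 + C a1 * X ^ 7 + C a2 * X ^ 6 + C a3 * X ^ 5 + C a4 * X ^ 4
    + C (q * a3) * X ^ 3 + C (q ^ 2 * a2) * X ^ 2 + C (q ^ 3 * a1) * X + C (q ^ 4)

section weilOctic

variable (q a1 a2 a3 a4 : ℝ)

lemma monic_weilOctic : (weilOctic q a1 a2 a3 a4).Monic := by
  unfold weilOctic; monicity!

lemma natDegree_weilOctic : (weilOctic q a1 a2 a3 a4).natDegree = 8 := by
  unfold weilOctic; compute_degree!

lemma coeff_weilOctic_seven : (weilOctic q a1 a2 a3 a4).coeff 7 = a1 := by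
  simp only [weilOctic, coeff_add, coeff_C_mul, coeff_X_pow, coeff_X, coeff_C]
  norm_num

lemma coeff_weilOctic_six : (weilOctic q a1 a2 a3 a4).coeff 6 = a2 := by
  simp only [weilOctic, coeff_add, coeff_C_mul, coeff_X_pow, coeff_X, coeff_C]
  norm_num

end weilOctic

lemma prod_four_quadratics_eq_weilOctic (q x1 x2 x3 x4 : ℝ) :
    (X ^ 2 - C x1 * X + C q) * (X ^ 2 - C x2 * X + C q) * (X ^ 2 - C x3 * X + C q)
        * (X ^ 2 - C x4 * X + C q) =
      weilOctic q (-(x1 + x2 + x3 + x4))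
        (x1 * x2 + x1 * x3 + x1 * x4 + x2 * x3 + x2 * x4 + x3 * x4 + 4 * q)
        (-(x1 * x2 * x3 + x1 * x2 * x4 + x1 * x3 * x4 + x2 * x3 * x4)
          - 3 * q * (x1 + x2 + x3 + x4))
        (x1 * x2 * x3 * x4
          + 2 * q * (x1 * x2 + x1 * x3 + x1 * x4 + x2 * x3 + x2 * x4 + x3 * x4) + 6 * q ^ 2) := by
  simp only [weilOctic, map_add, map_sub, map_mul, map_neg, map_pow, map_ofNat]
  ring

lemma esymm_one_two_bounds_of_abs_lt {c x1 x2 x3 x4 : ℝ}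
    (h1 : |x1| < 2 * c) (h2 : |x2| < 2 * c) (h3 : |x3| < 2 * c) (h4 : |x4| < 2 * c) :
    |x1 + x2 + x3 + x4| < 8 * c ∧
      6 * c * |x1 + x2 + x3 + x4| - 24 * c ^ 2 <
        x1 * x2 + x1 * x3 + x1 * x4 + x2 * x3 + x2 * x4 + x3 * x4 ∧
      x1 * x2 + x1 * x3 + x1 * x4 + x2 * x3 + x2 * x4 + x3 * x4 ≤
        3 * (x1 + x2 + x3 + x4) ^ 2 / 8 := by
  rw [abs_lt] at h1 h2 h3 h4
  refine ⟨abs_lt.mpr ⟨by linarith, by linarith⟩, ?_, ?_⟩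
  · rcases abs_cases (x1 + x2 + x3 + x4) with ⟨h, -⟩ | ⟨h, -⟩ <;> rw [h]
    · have p1 : 0 < 2 * c - x1 := by linarith
      have p2 : 0 < 2 * c - x2 := by linarith
      have p3 : 0 < 2 * c - x3 := by linarith
      have p4 : 0 < 2 * c - x4 := by linarith
      nlinarith [mul_pos p1 p2, mul_pos p1 p3, mul_pos p1 p4, mul_pos p2 p3,
        mul_pos p2 p4, mul_pos p3 p4]
    · have p1 : 0 < 2 * c + x1 := by linarith
      have p2 : 0 < 2 * c + x2 := by linarith
      have p3 : 0 < 2 * c + x3 := by linarith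
      have p4 : 0 < 2 * c + x4 := by linarith
      nlinarith [mul_pos p1 p2, mul_pos p1 p3, mul_pos p1 p4, mul_pos p2 p3,
        mul_pos p2 p4, mul_pos p3 p4]
  · nlinarith [sq_nonneg (x1 - x2), sq_nonneg (x1 - x3), sq_nonneg (x1 - x4),
      sq_nonneg (x2 - x3), sq_nonneg (x2 - x4), sq_nonneg (x3 - x4)]

theorem weil_octic_coeff_bounds_one_two_general (q a1 a2 a3 a4 : ℝ) (P : ℝ[X])
    (hP : P = X ^ 8 + C a1 * X ^ 7 + C a2 * X ^ 6 + C a3 * X ^ 5 + C a4 * X ^ 4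
        + C (q * a3) * X ^ 3 + C (q ^ 2 * a2) * X ^ 2 + C (q ^ 3 * a1) * X
        + C (q ^ 4))
    (hweil : ∀ z : ℂ, aeval z P = 0 → ‖z‖ = Real.sqrt q)
    (hnoreal : ∀ t : ℝ, P.eval t ≠ 0) :
    |a1| < 8 * Real.sqrt q ∧
      6 * Real.sqrt q * |a1| - 20 * q < a2 ∧ a2 ≤ 3 * a1 ^ 2 / 8 + 4 * q := by
  change P = weilOctic q a1 a2 a3 a4 at hP
  obtain ⟨xs, hxs, hfactor⟩ :=
    (hP ▸ monic_weilOctic q a1 a2 a3 a4).exists_eq_prod_weil_quadratic hweil hnoreal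
  have hcard : Multiset.card xs = 4 := by
    have h := congrArg natDegree hfactor
    rw [hP, natDegree_weilOctic, natDegree_multiset_prod_quadratic] at h
    omega
  obtain ⟨x1, x2, x3, x4, rfl⟩ := Multiset.card_eq_four.mp hcard
  simp only [Multiset.insert_eq_cons, Multiset.mem_cons, Multiset.mem_singleton,
    forall_eq_or_imp, forall_eq] at hxs
  obtain ⟨h1, h2, h3, h4⟩ := hxs
  have hq : 0 < q := Real.sqrt_pos.mp (by linarith [abs_nonneg x1])
  simp only [Multiset.insert_eq_cons, Multiset.map_cons, Multiset.map_singleton,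
    Multiset.prod_cons, Multiset.prod_singleton, ← mul_assoc] at hfactor
  rw [prod_four_quadratics_eq_weilOctic, hP] at hfactor
  have ha1 := congrArg (coeff · 7) hfactor
  have ha2 := congrArg (coeff · 6) hfactor
  simp only [coeff_weilOctic_seven, coeff_weilOctic_six] at ha1 ha2
  obtain ⟨b1, b2, b3⟩ := esymm_one_two_bounds_of_abs_lt h1 h2 h3 h4
  rw [Real.sq_sqrt hq.le] at b2
  rw [ha1, ha2, abs_neg]
  exact ⟨b1, by linarith, by linarith [neg_sq (x1 + x2 + x3 + x4)]⟩

theorem weil_octic_coeff_bounds_one_two (q a1 a2 a3 a4 : ℝ) (hq : 0 < q) (P : ℝ[X])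
    (hP : P = X ^ 8 + C a1 * X ^ 7 + C a2 * X ^ 6 + C a3 * X ^ 5 + C a4 * X ^ 4
        + C (q * a3) * X ^ 3 + C (q ^ 2 * a2) * X ^ 2 + C (q ^ 3 * a1) * X
        + C (q ^ 4))
    (hweil : ∀ z : ℂ, aeval z P = 0 → ‖z‖ = Real.sqrt q)
    (hnoreal : ∀ t : ℝ, P.eval t ≠ 0) :
    |a1| < 8 * Real.sqrt q ∧
      6 * Real.sqrt q * |a1| - 20 * q < a2 ∧ a2 ≤ 3 * a1 ^ 2 / 8 + 4 * q :=
  weil_octic_coeff_bounds_one_two_general q a1 a2 a3 a4 P hP hweil hnoreal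
end

section
/- Let p(t) = t^8 + a1 t^7 + a2 t^6 + a3 t^5 + a4 t^4 + q a3 t^3 + q^2 a2 t^2 + q^3 a1 t + q^4 be a Weil polynomial (q > 0) with no real roots. Then -9q a1 - 4√q a2 - 16q√q < a3 < -9q a1 + 4√q a2 + 16q√q, and -a1³/8 + a1 a2/2 + q a1 - ((2/3)(3a1²/8 - a2 + 4q))^{3/2} ≤ a3 ≤ -a1³/8 + a1 a2/2 + q a1 + ((2/3)(3a1²/8 - a2 + 4q))^{3/2}. -/
/-!
A real polynomial without real roots whose complex roots all have absolute value `√q` is a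
product of quadratics `X² - xᵢ X + q` with `xᵢ² < 4q`. For the octic there are four of them, and
`a1 = -e₁`, `a2 = e₂ + 4q`, `a3 = -e₃ - 3q e₁` in the elementary symmetric functions of the `xᵢ`.
The gaps in (3) are `e₃` of the positive numbers `2√q ∓ xᵢ`. After centring, `uᵢ = xᵢ - e₁/4`,
(4) becomes the power-sum inequality `3 (∑ uᵢ³)² ≤ (∑ uᵢ²)³` for four reals with `∑ uᵢ = 0`.
-/

open Polynomial

theorem exists_quadratic_dvd_of_norm_roots_eq {q : ℝ} (hq : 0 ≤ q) {P : ℝ[X]}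
    (hP : P.degree ≠ 0) (hweil : ∀ z : ℂ, aeval z P = 0 → ‖z‖ = √q)
    (hnoreal : ∀ t : ℝ, P.eval t ≠ 0) :
    ∃ x : ℝ, x ^ 2 < 4 * q ∧ X ^ 2 - C x * X + C q ∣ P := by
  obtain ⟨z, hz⟩ := IsAlgClosed.exists_aeval_eq_zero ℂ P hP
  have him : z.im ≠ 0 := by
    intro him
    rw [← Complex.re_add_im z, him, Complex.ofReal_zero, zero_mul, add_zero,
      ← Complex.coe_algebraMap, aeval_algebraMap_apply, map_eq_zero] at hz
    exact hnoreal z.re (by simpa [aeval_def] using hz)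
  have hnorm : ‖z‖ ^ 2 = q := by rw [hweil z hz, Real.sq_sqrt hq]
  refine ⟨2 * z.re, ?_, hnorm ▸ P.quadratic_dvd_of_aeval_eq_zero_im_ne_zero hz him⟩
  rw [← hnorm, Complex.sq_norm, Complex.normSq_apply]
  nlinarith [mul_self_pos.mpr him]

theorem exists_eq_prod_quadratics_of_norm_roots_eq {q : ℝ} (hq : 0 ≤ q) {P : ℝ[X]}
    (hm : P.Monic) (hweil : ∀ z : ℂ, aeval z P = 0 → ‖z‖ = √q)
    (hnoreal : ∀ t : ℝ, P.eval t ≠ 0) :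
    ∃ l : List ℝ, (∀ x ∈ l, x ^ 2 < 4 * q) ∧ 2 * l.length = P.natDegree ∧
      P = (l.map fun x => X ^ 2 - C x * X + C q).prod := by
  induction hn : P.natDegree using Nat.strong_induction_on generalizing P with
  | _ n ih =>
  rcases Nat.eq_zero_or_pos n with rfl | hpos
  · exact ⟨[], by simp, by simp, by simpa using hm.natDegree_eq_zero.mp hn⟩
  obtain ⟨x, hx, Q, rfl⟩ := exists_quadratic_dvd_of_norm_roots_eq hq
    (natDegree_pos_iff_degree_pos.mp (hn ▸ hpos)).ne' hweil hnoreal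
  have hDm : (X ^ 2 - C x * X + C q).Monic := by monicity!
  have hQm : Q.Monic := hDm.of_mul_monic_left hm
  have hD : (X ^ 2 - C x * X + C q).natDegree = 2 := by compute_degree!
  have hdeg : Q.natDegree + 2 = n := by
    rw [← hn, natDegree_mul hDm.ne_zero hQm.ne_zero, hD, add_comm]
  obtain ⟨l, hl, hlen, rfl⟩ := ih Q.natDegree (by omega) hQm
    (fun z hz => hweil z (by rw [map_mul, hz, mul_zero]))
    (fun t ht => hnoreal t (by rw [eval_mul, ht, mul_zero])) rfl
  refine ⟨x :: l, ?_, by rw [List.length_cons]; omega, by simp⟩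
  simpa [hx] using hl

theorem prod_four_quadratics_eq (q x1 x2 x3 x4 : ℝ) :
    ([x1, x2, x3, x4].map fun x => X ^ 2 - C x * X + C q).prod =
      X ^ 8 + C (-(x1 + x2 + x3 + x4)) * X ^ 7
        + C (x1 * x2 + x1 * x3 + x1 * x4 + x2 * x3 + x2 * x4 + x3 * x4 + 4 * q) * X ^ 6
        + C (-(x1 * x2 * x3 + x1 * x2 * x4 + x1 * x3 * x4 + x2 * x3 * x4)
            - 3 * q * (x1 + x2 + x3 + x4)) * X ^ 5
        + C (x1 * x2 * x3 * x4 + 2 * q * (x1 * x2 + x1 * x3 + x1 * x4 + x2 * x3 + x2 * x4 + x3 * x4)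
            + 6 * q ^ 2) * X ^ 4
        + C (-q * (x1 * x2 * x3 + x1 * x2 * x4 + x1 * x3 * x4 + x2 * x3 * x4)
            - 3 * q ^ 2 * (x1 + x2 + x3 + x4)) * X ^ 3
        + C (q ^ 2 * (x1 * x2 + x1 * x3 + x1 * x4 + x2 * x3 + x2 * x4 + x3 * x4)
            + 4 * q ^ 3) * X ^ 2
        + C (-q ^ 3 * (x1 + x2 + x3 + x4)) * X + C (q ^ 4) := by
  simp only [List.map_cons, List.map_nil, List.prod_cons, List.prod_nil, map_add, map_sub,
    map_mul, map_neg, map_pow, map_ofNat]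
  ring

theorem octic_top_coeffs_eq_of_eq {a1 a2 a3 a4 a5 a6 a7 a8 b1 b2 b3 b4 b5 b6 b7 b8 : ℝ}
    (h : (X ^ 8 + C a1 * X ^ 7 + C a2 * X ^ 6 + C a3 * X ^ 5 + C a4 * X ^ 4 + C a5 * X ^ 3
        + C a6 * X ^ 2 + C a7 * X + C a8 : ℝ[X]) =
      X ^ 8 + C b1 * X ^ 7 + C b2 * X ^ 6 + C b3 * X ^ 5 + C b4 * X ^ 4 + C b5 * X ^ 3
        + C b6 * X ^ 2 + C b7 * X + C b8) :
    a1 = b1 ∧ a2 = b2 ∧ a3 = b3 := by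
  refine ⟨?_, ?_, ?_⟩
  · simpa [coeff_X, coeff_C] using congrArg (coeff · 7) h
  · simpa [coeff_X, coeff_C] using congrArg (coeff · 6) h
  · simpa [coeff_X, coeff_C] using congrArg (coeff · 5) h

theorem sum_triple_mul_pos {y1 y2 y3 y4 : ℝ} (h1 : 0 < y1) (h2 : 0 < y2) (h3 : 0 < y3)
    (h4 : 0 < y4) : 0 < y1 * y2 * y3 + y1 * y2 * y4 + y1 * y3 * y4 + y2 * y3 * y4 := by
  have := mul_pos (mul_pos h1 h2) h3
  have := mul_pos (mul_pos h1 h2) h4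
  have := mul_pos (mul_pos h1 h3) h4
  have := mul_pos (mul_pos h2 h3) h4
  linarith

theorem third_coeff_gt_of_sq_lt {q a1 a2 a3 x1 x2 x3 x4 : ℝ} (hq : 0 ≤ q)
    (hx1 : x1 ^ 2 < 4 * q) (hx2 : x2 ^ 2 < 4 * q) (hx3 : x3 ^ 2 < 4 * q) (hx4 : x4 ^ 2 < 4 * q)
    (ha1 : a1 = -(x1 + x2 + x3 + x4))
    (ha2 : a2 = x1 * x2 + x1 * x3 + x1 * x4 + x2 * x3 + x2 * x4 + x3 * x4 + 4 * q)
    (ha3 : a3 = -(x1 * x2 * x3 + x1 * x2 * x4 + x1 * x3 * x4 + x2 * x3 * x4)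
      - 3 * q * (x1 + x2 + x3 + x4)) :
    -9 * q * a1 - 4 * √q * a2 - 16 * q * √q < a3 := by
  have hs : √q ^ 2 = q := Real.sq_sqrt hq
  have hlt : ∀ {x : ℝ}, x ^ 2 < 4 * q → 0 < 2 * √q - x := fun hx =>
    sub_pos.mpr (abs_lt_of_sq_lt_sq' (by rw [mul_pow, hs]; linarith) (by positivity)).2
  have hpos := sum_triple_mul_pos (hlt hx1) (hlt hx2) (hlt hx3) (hlt hx4)
  have hid : a3 - (-9 * q * a1 - 4 * √q * a2 - 16 * q * √q) =
      (2 * √q - x1) * (2 * √q - x2) * (2 * √q - x3) + (2 * √q - x1) * (2 * √q - x2) * (2 * √q - x4)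
        + (2 * √q - x1) * (2 * √q - x3) * (2 * √q - x4)
        + (2 * √q - x2) * (2 * √q - x3) * (2 * √q - x4) := by
    rw [ha1, ha2, ha3]; generalize √q = s at hs ⊢; subst hs; ring
  linarith

theorem third_coeff_strict_bounds_of_sq_lt {q a1 a2 a3 x1 x2 x3 x4 : ℝ} (hq : 0 ≤ q)
    (hx1 : x1 ^ 2 < 4 * q) (hx2 : x2 ^ 2 < 4 * q) (hx3 : x3 ^ 2 < 4 * q) (hx4 : x4 ^ 2 < 4 * q)
    (ha1 : a1 = -(x1 + x2 + x3 + x4))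
    (ha2 : a2 = x1 * x2 + x1 * x3 + x1 * x4 + x2 * x3 + x2 * x4 + x3 * x4 + 4 * q)
    (ha3 : a3 = -(x1 * x2 * x3 + x1 * x2 * x4 + x1 * x3 * x4 + x2 * x3 * x4)
      - 3 * q * (x1 + x2 + x3 + x4)) :
    -9 * q * a1 - 4 * √q * a2 - 16 * q * √q < a3 ∧
      a3 < -9 * q * a1 + 4 * √q * a2 + 16 * q * √q := by
  refine ⟨third_coeff_gt_of_sq_lt hq hx1 hx2 hx3 hx4 ha1 ha2 ha3, ?_⟩
  -- `x ↦ -x` sends `(a1, a2, a3)` to `(-a1, a2, -a3)`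
  have := third_coeff_gt_of_sq_lt (a1 := -a1) (a2 := a2) (a3 := -a3)
    (x1 := -x1) (x2 := -x2) (x3 := -x3) (x4 := -x4) hq (by rwa [neg_sq]) (by rwa [neg_sq]) (by rwa [neg_sq]) (by rwa [neg_sq])
    (by rw [ha1]; ring) (by rw [ha2]; ring) (by rw [ha3]; ring)
  linarith

theorem sum_cube_le_of_sum_eq_zero {u1 u2 u3 u4 t : ℝ} (h0 : u1 + u2 + u3 + u4 = 0)
    (ht0 : 0 ≤ t) (ht : 12 * t ^ 2 = u1 ^ 2 + u2 ^ 2 + u3 ^ 2 + u4 ^ 2) :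
    u1 ^ 3 + u2 ^ 3 + u3 ^ 3 + u4 ^ 3 ≤ 2 * t * (u1 ^ 2 + u2 ^ 2 + u3 ^ 2 + u4 ^ 2) := by
  -- `uᵢ ≤ 3t`, so each `(uᵢ + t)² (uᵢ - 3t) ≤ 0`, with equality at the extremal
  -- point `(3t, -t, -t, -t)`
  have hle : ∀ {u v w x : ℝ}, u + v + w + x = 0 → 12 * t ^ 2 = u ^ 2 + v ^ 2 + w ^ 2 + x ^ 2 →
      (u + t) ^ 2 * (u - 3 * t) ≤ 0 := fun {u v w x} h h' => by
    refine mul_nonpos_of_nonneg_of_nonpos (sq_nonneg _) (sub_nonpos.mpr ?_)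
    refine (abs_le_of_sq_le_sq' ?_ (by positivity)).2
    obtain rfl : u = -(v + w + x) := by linarith
    nlinarith [sq_nonneg (v - w), sq_nonneg (v - x), sq_nonneg (w - x)]
  have h1 := hle h0 ht
  have h2 := hle (u := u2) (v := u1) (w := u3) (x := u4) (by linarith) (by linarith)
  have h3 := hle (u := u3) (v := u1) (w := u2) (x := u4) (by linarith) (by linarith)
  have h4 := hle (u := u4) (v := u1) (w := u2) (x := u3) (by linarith) (by linarith)
  have hid : u1 ^ 3 + u2 ^ 3 + u3 ^ 3 + u4 ^ 3 - 2 * t * (u1 ^ 2 + u2 ^ 2 + u3 ^ 2 + u4 ^ 2) =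
      (u1 + t) ^ 2 * (u1 - 3 * t) + (u2 + t) ^ 2 * (u2 - 3 * t) + (u3 + t) ^ 2 * (u3 - 3 * t)
        + (u4 + t) ^ 2 * (u4 - 3 * t) := by
    linear_combination 5 * t ^ 2 * h0 + t * ht
  linarith

theorem three_mul_sum_cube_sq_le_of_sum_eq_zero {u1 u2 u3 u4 : ℝ} (h0 : u1 + u2 + u3 + u4 = 0) :
    3 * (u1 ^ 3 + u2 ^ 3 + u3 ^ 3 + u4 ^ 3) ^ 2 ≤ (u1 ^ 2 + u2 ^ 2 + u3 ^ 2 + u4 ^ 2) ^ 3 := by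
  set S2 := u1 ^ 2 + u2 ^ 2 + u3 ^ 2 + u4 ^ 2
  set t := √(S2 / 12)
  have ht : 12 * t ^ 2 = S2 := by rw [Real.sq_sqrt (by positivity)]; ring
  have hup := sum_cube_le_of_sum_eq_zero h0 (Real.sqrt_nonneg _) ht
  have hdown := sum_cube_le_of_sum_eq_zero (u1 := -u1) (u2 := -u2) (u3 := -u3) (u4 := -u4)
    (by linear_combination -h0) (Real.sqrt_nonneg _) (by rw [ht]; ring)
  calc 3 * (u1 ^ 3 + u2 ^ 3 + u3 ^ 3 + u4 ^ 3) ^ 2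
      ≤ 3 * (2 * t * S2) ^ 2 := by
        gcongr 3 * ?_
        exact sq_le_sq' (by linarith) hup
    _ = S2 ^ 3 := by linear_combination S2 ^ 2 * ht

theorem abs_le_rpow_three_halves_of_sq_le_pow_three {m T : ℝ} (h : m ^ 2 ≤ T ^ 3) :
    |m| ≤ T ^ (3 / 2 : ℝ) := by
  have hT : 0 ≤ T := (Odd.pow_nonneg_iff (by decide)).mp ((sq_nonneg m).trans h)
  rw [show (3 / 2 : ℝ) = (3 : ℕ) * (1 / 2) by norm_num, Real.rpow_mul hT, Real.rpow_natCast,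
    ← Real.sqrt_eq_rpow]
  exact Real.abs_le_sqrt h

theorem third_coeff_rpow_bounds {q a1 a2 a3 x1 x2 x3 x4 : ℝ}
    (ha1 : a1 = -(x1 + x2 + x3 + x4))
    (ha2 : a2 = x1 * x2 + x1 * x3 + x1 * x4 + x2 * x3 + x2 * x4 + x3 * x4 + 4 * q)
    (ha3 : a3 = -(x1 * x2 * x3 + x1 * x2 * x4 + x1 * x3 * x4 + x2 * x3 * x4)
      - 3 * q * (x1 + x2 + x3 + x4)) :
    -a1 ^ 3 / 8 + a1 * a2 / 2 + q * a1 - ((2 / 3) * (3 * a1 ^ 2 / 8 - a2 + 4 * q)) ^ ((3 : ℝ) / 2)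
        ≤ a3 ∧
      a3 ≤ -a1 ^ 3 / 8 + a1 * a2 / 2 + q * a1
        + ((2 / 3) * (3 * a1 ^ 2 / 8 - a2 + 4 * q)) ^ ((3 : ℝ) / 2) := by
  set c := (x1 + x2 + x3 + x4) / 4
  have key := three_mul_sum_cube_sq_le_of_sum_eq_zero
    (u1 := x1 - c) (u2 := x2 - c) (u3 := x3 - c) (u4 := x4 - c) (by ring)
  have hm : a3 - (-a1 ^ 3 / 8 + a1 * a2 / 2 + q * a1) =
      -((x1 - c) ^ 3 + (x2 - c) ^ 3 + (x3 - c) ^ 3 + (x4 - c) ^ 3) / 3 := by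
    rw [ha1, ha2, ha3]; ring
  have hT : (2 / 3) * (3 * a1 ^ 2 / 8 - a2 + 4 * q) =
      ((x1 - c) ^ 2 + (x2 - c) ^ 2 + (x3 - c) ^ 2 + (x4 - c) ^ 2) / 3 := by
    rw [ha1, ha2]; ring
  have habs := abs_le_rpow_three_halves_of_sq_le_pow_three
    (m := a3 - (-a1 ^ 3 / 8 + a1 * a2 / 2 + q * a1)) (T := (2 / 3) * (3 * a1 ^ 2 / 8 - a2 + 4 * q))
    (by rw [hm, hT]; linarith)
  constructor <;> linarith [abs_le.mp habs]

theorem weil_octic_coeff_bounds_three_four (q a1 a2 a3 a4 : ℝ) (hq : 0 < q) (P : ℝ[X])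
    (hP : P = X ^ 8 + C a1 * X ^ 7 + C a2 * X ^ 6 + C a3 * X ^ 5 + C a4 * X ^ 4
        + C (q * a3) * X ^ 3 + C (q ^ 2 * a2) * X ^ 2 + C (q ^ 3 * a1) * X
        + C (q ^ 4))
    (hweil : ∀ z : ℂ, aeval z P = 0 → ‖z‖ = Real.sqrt q)
    (hnoreal : ∀ t : ℝ, P.eval t ≠ 0) :
    (-9 * q * a1 - 4 * Real.sqrt q * a2 - 16 * q * Real.sqrt q < a3 ∧
        a3 < -9 * q * a1 + 4 * Real.sqrt q * a2 + 16 * q * Real.sqrt q) ∧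
      (-a1 ^ 3 / 8 + a1 * a2 / 2 + q * a1
          - ((2 / 3) * (3 * a1 ^ 2 / 8 - a2 + 4 * q)) ^ ((3 : ℝ) / 2) ≤ a3 ∧
        a3 ≤ -a1 ^ 3 / 8 + a1 * a2 / 2 + q * a1
          + ((2 / 3) * (3 * a1 ^ 2 / 8 - a2 + 4 * q)) ^ ((3 : ℝ) / 2)) := by
  have hm : P.Monic := by rw [hP]; monicity!
  have hdeg : P.natDegree = 8 := by rw [hP]; compute_degree!
  obtain ⟨l, hl, hlen, hprod⟩ := exists_eq_prod_quadratics_of_norm_roots_eq hq.le hm hweil hnoreal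
  obtain ⟨x1, x2, x3, x4, rfl⟩ := List.length_eq_four.mp (show l.length = 4 by omega)
  obtain ⟨ha1, ha2, ha3⟩ :=
    octic_top_coeffs_eq_of_eq (hP.symm.trans (hprod.trans (prod_four_quadratics_eq q x1 x2 x3 x4)))
  exact ⟨third_coeff_strict_bounds_of_sq_lt hq.le (hl x1 (by simp)) (hl x2 (by simp))
      (hl x3 (by simp)) (hl x4 (by simp)) ha1 ha2 ha3, third_coeff_rpow_bounds ha1 ha2 ha3⟩
end

section
/- Let p(t) = t^8 + a1 t^7 + ... + q^4 be a Weil polynomial (q > 0) with no real roots. Then 2√q|q a1 + a3| - 2q a2 - 2q² < a4. -/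
/-!
Only the values at `t = ±√q` matter. By the palindromic symmetry of the coefficients, with
`s = ±√q` the terms of degree `k` and `8 - k` coincide, so
`p(s) = s⁴ (a4 + 2 q a2 + 2 q² + 2 s (q a1 + a3))`. A real polynomial without real roots has
constant sign, and `p(0) = q⁴ > 0`, so both values are positive; adding the two sign cases gives
`2 √q |q a1 + a3| < a4 + 2 q a2 + 2 q²`.
-/

open Polynomial

namespace Polynomial

theorem eval_pos_of_forall_eval_ne_zero {P : ℝ[X]} (hP : ∀ t : ℝ, P.eval t ≠ 0) {a : ℝ}
    (ha : 0 < P.eval a) (t : ℝ) : 0 < P.eval t := by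
  by_contra! ht
  obtain ⟨c, -, hc⟩ := intermediate_value_uIcc P.continuous.continuousOn
    (Set.mem_uIcc.2 (Or.inl ⟨ht, ha.le⟩) : (0 : ℝ) ∈ Set.uIcc (P.eval t) (P.eval a))
  exact hP c hc

section PalindromicOctic

variable {R : Type*} [CommRing R]

noncomputable def palindromicOctic (q a1 a2 a3 a4 : R) : R[X] :=
  X ^ 8 + C a1 * X ^ 7 + C a2 * X ^ 6 + C a3 * X ^ 5 + C a4 * X ^ 4
    + C (q * a3) * X ^ 3 + C (q ^ 2 * a2) * X ^ 2 + C (q ^ 3 * a1) * X + C (q ^ 4)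

theorem eval_palindromicOctic_of_sq_eq (q a1 a2 a3 a4 : R) {s : R} (hs : s ^ 2 = q) :
    (palindromicOctic q a1 a2 a3 a4).eval s
      = s ^ 4 * (a4 + 2 * q * a2 + 2 * q ^ 2 + 2 * s * (q * a1 + a3)) := by
  subst hs
  simp only [palindromicOctic, eval_add, eval_mul, eval_pow, eval_X, eval_C]
  ring

theorem eval_palindromicOctic_zero (q a1 a2 a3 a4 : R) :
    (palindromicOctic q a1 a2 a3 a4).eval 0 = q ^ 4 := by
  simp [palindromicOctic]

end PalindromicOctic

end Polynomial

theorem weil_octic_coeff_bound_five_general (q a1 a2 a3 a4 : ℝ) (hq : 0 < q) (P : ℝ[X])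
    (hP : P = X ^ 8 + C a1 * X ^ 7 + C a2 * X ^ 6 + C a3 * X ^ 5 + C a4 * X ^ 4
        + C (q * a3) * X ^ 3 + C (q ^ 2 * a2) * X ^ 2 + C (q ^ 3 * a1) * X
        + C (q ^ 4))
    (hnoreal : ∀ t : ℝ, P.eval t ≠ 0) :
    2 * Real.sqrt q * |q * a1 + a3| - 2 * q * a2 - 2 * q ^ 2 < a4 := by
  change P = palindromicOctic q a1 a2 a3 a4 at hP
  subst hP
  set s := Real.sqrt q
  have hs : s ^ 2 = q := Real.sq_sqrt hq.le
  have hpos := eval_pos_of_forall_eval_ne_zero hnoreal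
    (by rw [eval_palindromicOctic_zero]; positivity : 0 < (palindromicOctic q a1 a2 a3 a4).eval 0)
  have hplus := hpos s
  have hminus := hpos (-s)
  rw [eval_palindromicOctic_of_sq_eq _ _ _ _ _ hs] at hplus
  rw [eval_palindromicOctic_of_sq_eq _ _ _ _ _ (by rw [neg_sq, hs])] at hminus
  have hplus' := pos_of_mul_pos_right hplus (by positivity)
  have hminus' := pos_of_mul_pos_right hminus (by positivity)
  rcases abs_cases (q * a1 + a3) with ⟨habs, -⟩ | ⟨habs, -⟩ <;> rw [habs] <;> linarith

theorem weil_octic_coeff_bound_five (q a1 a2 a3 a4 : ℝ) (hq : 0 < q) (P : ℝ[X])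
    (hP : P = X ^ 8 + C a1 * X ^ 7 + C a2 * X ^ 6 + C a3 * X ^ 5 + C a4 * X ^ 4
        + C (q * a3) * X ^ 3 + C (q ^ 2 * a2) * X ^ 2 + C (q ^ 3 * a1) * X
        + C (q ^ 4))
    (hweil : ∀ z : ℂ, aeval z P = 0 → ‖z‖ = Real.sqrt q)
    (hnoreal : ∀ t : ℝ, P.eval t ≠ 0) :
    2 * Real.sqrt q * |q * a1 + a3| - 2 * q * a2 - 2 * q ^ 2 < a4 :=
  weil_octic_coeff_bound_five_general q a1 a2 a3 a4 hq P hP hnoreal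
end
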